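/- arXiv:1906.01118 — 9 statements merged into one kernel-verified Lean document; each statement's English description precedes it below -/
import Mathlib

section
/- Let V be a finite vertex set partitioned into honest vertices H and cheaters C, with every endorsement from H going into H and every accusation from H going into C. Suppose U ⊆ V is strongly connected under endorsements (every vertex of U is reachable from every other vertex of U by a directed path of endorsements), |U| > |C|, and H ⊆ σ(U). Then U ⊆ H and σ(U) = H; in particular H is exactly determined by the network structure as the endorsement-downstream set of any endorsement-strongly-connected set of size greater than |C|. -/
/-- In the honesty setting, an endorsement-strongly-connected set `U` with
`|U| > |C|` and `H ⊆ σ(U)` satisfies `U ⊆ H` and `σ(U) = H`. -/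
theorem stmt_0 {V : Type*} [Fintype V] (E A : V → V → Prop)
    (hE : Irreflexive E) (hA : Irreflexive A)
    (H C : Set V) (hdisj : Disjoint H C) (hcover : H ∪ C = Set.univ)
    (hEnd : ∀ u v, u ∈ H → E u v → v ∈ H)
    (hAcc : ∀ u v, u ∈ H → A u v → v ∈ C)
    (U : Set V)
    (hstrong : ∀ u ∈ U, ∀ v ∈ U, Relation.ReflTransGen E u v)
    (hcard : C.ncard < U.ncard)
    (hHdown : H ⊆ {v | ∃ u ∈ U, Relation.ReflTransGen E u v}) :
    U ⊆ H ∧ {v | ∃ u ∈ U, Relation.ReflTransGen E u v} = H := by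
  have hclosed : ∀ u v, Relation.ReflTransGen E u v → u ∈ H → v ∈ H := by
    intro u v h hu
    induction h with
    | refl => exact hu
    | tail _ hstep ih => exact hEnd _ _ ih hstep
  -- U has an element in H
  have hUH : ∃ u₀ ∈ U, u₀ ∈ H := by
    by_contra hcon
    push_neg at hcon
    have hsub : U ⊆ C := by
      intro x hx
      have : x ∈ H ∪ C := hcover ▸ Set.mem_univ x
      rcases this with h | h
      · exact absurd h (hcon x hx)
      · exact h
    exact absurd (Set.ncard_le_ncard hsub (Set.toFinite C)) (not_le.mpr hcard)
  obtain ⟨u₀, hu₀U, hu₀H⟩ := hUH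
  have hU : U ⊆ H := fun v hv => hclosed _ _ (hstrong u₀ hu₀U v hv) hu₀H
  refine ⟨hU, Set.Subset.antisymm ?_ hHdown⟩
  rintro v ⟨u, hu, huv⟩
  exact hclosed _ _ huv (hU hu)
end

section
/- Let V be a finite vertex set partitioned into honest vertices H and cheaters C, with every accusation from H going into C. Suppose that for every nonempty subset S ⊆ C there exists U ⊆ H with U ⊣ S and |U| > |S|. Then H is the unique maximum-cardinality self-consistent subset of V: every self-consistent set Q with Q ≠ H satisfies |Q| < |H|. -/
/-- If every nonempty `S ⊆ C` is outnumbered by some `U ⊆ H` with `U ⊣ S`,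
then `H` is the unique maximum-cardinality self-consistent set. -/
theorem stmt_2 {V : Type*} [Fintype V] (E A : V → V → Prop)
    (hE : Irreflexive E) (hA : Irreflexive A)
    (H C : Set V) (hdisj : Disjoint H C) (hcover : H ∪ C = Set.univ)
    (hAcc : ∀ u v, u ∈ H → A u v → v ∈ C)
    (hout : ∀ S ⊆ C, S.Nonempty → ∃ U ⊆ H,
      ((∀ t ∈ U, ∃ s ∈ S, A t s) ∧ (∀ s ∈ S, ∃ t ∈ U, A t s)) ∧ S.ncard < U.ncard) :
    ∀ Q : Set V, (∀ u ∈ Q, ∀ v ∈ Q, ¬ A u v) → Q ≠ H → Q.ncard < H.ncard := by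
  intro Q hQ hQH
  set S : Set V := Q ∩ C with hS
  by_cases hSne : S.Nonempty
  · obtain ⟨U, hUH, ⟨hU1, _⟩, hcard⟩ := hout S Set.inter_subset_right hSne
    -- U is disjoint from Q
    have hUQ : Disjoint U Q := by
      rw [Set.disjoint_left]
      intro t htU htQ
      obtain ⟨s, hsS, hAts⟩ := hU1 t htU
      exact hQ t htQ s hsS.1 hAts
    have hQsplit : Q = (Q ∩ H) ∪ S := by
      ext x
      simp only [Set.mem_union, Set.mem_inter_iff, hS]
      constructor
      · intro hx
        have : x ∈ H ∪ C := hcover ▸ Set.mem_univ x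
        rcases this with h | h
        · exact Or.inl ⟨hx, h⟩
        · exact Or.inr ⟨hx, h⟩
      · rintro (⟨h, _⟩ | ⟨h, _⟩) <;> exact h
    have h1 : Q.ncard ≤ (Q ∩ H).ncard + S.ncard := by
      calc Q.ncard = ((Q ∩ H) ∪ S).ncard := by rw [← hQsplit]
        _ ≤ (Q ∩ H).ncard + S.ncard := Set.ncard_union_le _ _
    have h2 : (Q ∩ H).ncard + U.ncard ≤ H.ncard := by
      have hdisj2 : Disjoint (Q ∩ H) U := by
        rw [Set.disjoint_left]
        intro x hx hxU
        exact Set.disjoint_left.mp hUQ hxU hx.1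
      calc (Q ∩ H).ncard + U.ncard = ((Q ∩ H) ∪ U).ncard := by
            rw [Set.ncard_union_eq hdisj2 (Set.toFinite _) (Set.toFinite _)]
        _ ≤ H.ncard := Set.ncard_le_ncard
            (Set.union_subset Set.inter_subset_right hUH) (Set.toFinite _)
    omega
  · -- Q ⊆ H, Q ≠ H
    have hQsub : Q ⊆ H := by
      intro x hx
      have : x ∈ H ∪ C := hcover ▸ Set.mem_univ x
      rcases this with h | h
      · exact h
      · exact absurd (Set.not_nonempty_iff_eq_empty.mp hSne ▸ (⟨hx, h⟩ : x ∈ S)) (Set.notMem_empty x)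
    exact Set.ncard_lt_ncard (hQsub.ssubset_of_ne hQH) (Set.toFinite _)
end

section
/- Let V be a finite vertex set partitioned into honest vertices H and cheaters C with |C| = k, with every accusation from H going into C. Suppose C = {c_1, …, c_k} (distinct) and there exist distinct vertices h_1, …, h_{k+1} ∈ H such that h_i ⊣ c_i for each 1 ≤ i ≤ k and h_{i+1} ⊣ c_i for each 1 ≤ i ≤ k. Then H is the unique maximum-cardinality self-consistent subset of V: every self-consistent set Q with Q ≠ H satisfies |Q| < |H|. -/
/-- The Hamiltonian accusation path `h₁ ⊣ c₁ ⊢ h₂ ⊣ c₂ ⋯ ⊢ h_{k+1}` makes `H`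
the unique maximum-cardinality self-consistent set. -/
theorem stmt_3 {V : Type*} [Fintype V] (E A : V → V → Prop)
    (hE : Irreflexive E) (hA : Irreflexive A)
    (H C : Set V) (hdisj : Disjoint H C) (hcover : H ∪ C = Set.univ)
    (hAcc : ∀ u v, u ∈ H → A u v → v ∈ C)
    (k : ℕ) (c : Fin k → V) (hc : Function.Injective c) (hcC : Set.range c = C)
    (h : Fin (k + 1) → V) (hh : Function.Injective h) (hhH : ∀ i, h i ∈ H)
    (hacc1 : ∀ i : Fin k, A (h i.castSucc) (c i))
    (hacc2 : ∀ i : Fin k, A (h i.succ) (c i)) :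
    ∀ Q : Set V, (∀ u ∈ Q, ∀ v ∈ Q, ¬ A u v) → Q ≠ H → Q.ncard < H.ncard := by
  classical
  intro Q hQ hQH
  by_cases hsub : Q ⊆ H
  · exact Set.ncard_lt_ncard (lt_of_le_of_ne hsub hQH) (Set.toFinite H)
  · -- Q contains a cheater
    obtain ⟨v, hvQ, hvH⟩ := Set.not_subset.mp hsub
    have hvC : v ∈ C := by
      have := hcover ▸ Set.mem_univ v
      rcases (Set.mem_union v H C).mp (by rw [hcover]; trivial) with h' | h'
      · exact absurd h' hvH
      · exact h'
    obtain ⟨i, hi⟩ := hcC ▸ hvC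
    -- minimal index with c i ∈ Q
    have hP : ∃ n : ℕ, ∃ hn : n < k, c ⟨n, hn⟩ ∈ Q := ⟨i, i.isLt, by rwa [Fin.eta, hi]⟩
    let n₀ := Nat.find hP
    obtain ⟨hn₀, hc₀⟩ := Nat.find_spec hP
    set i₀ : Fin k := ⟨n₀, hn₀⟩ with hi₀def
    have hmin : ∀ j : Fin k, c j ∈ Q → n₀ ≤ (j : ℕ) := by
      intro j hj
      by_contra hlt
      exact Nat.find_min hP (Nat.lt_of_not_le hlt) ⟨j.isLt, by simpa using hj⟩
    -- the excluded honest vertex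
    set x := h i₀.castSucc with hxdef
    have hxH : x ∈ H := hhH _
    have hxQ : x ∉ Q := fun hxQ => hQ x hxQ (c i₀) hc₀ (hacc1 i₀)
    -- helper: h i.succ ∉ Q when c i ∈ Q
    have hsuccQ : ∀ i : Fin k, c i ∈ Q → h i.succ ∉ Q :=
      fun i hci hhi => hQ (h i.succ) hhi (c i) hci (hacc2 i)
    -- the injection
    set f : V → V := fun v => if hv : ∃ j : Fin k, c j = v then h (hv.choose).succ else v
      with hfdef
    have hfC : ∀ (j : Fin k), f (c j) = h j.succ := by
      intro j
      have hv : ∃ j' : Fin k, c j' = c j := ⟨j, rfl⟩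
      have : hv.choose = j := hc hv.choose_spec
      simp only [hfdef, dif_pos hv, this]
    have hfH : ∀ v, v ∉ C → f v = v := by
      intro v hv
      have : ¬ ∃ j : Fin k, c j = v := by
        rintro ⟨j, rfl⟩; exact hv (hcC ▸ Set.mem_range_self j)
      simp only [hfdef, dif_neg this]
    have hmem : ∀ v, v ∈ H ∨ v ∈ C := by
      intro v
      exact (Set.mem_union v H C).mp (by rw [hcover]; trivial)
    have hmaps : ∀ q ∈ Q, f q ∈ H \ {x} := by
      intro q hq
      rcases hmem q with hqH | hqC
      · have hqC : q ∉ C := fun hc' => Set.disjoint_left.mp hdisj hqH hc'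
        rw [hfH q hqC]
        exact ⟨hqH, fun he => hxQ (he ▸ hq)⟩
      · obtain ⟨j, rfl⟩ := hcC ▸ hqC
        rw [hfC j]
        refine ⟨hhH _, fun he => ?_⟩
        have he' : j.succ = i₀.castSucc := hh (Set.mem_singleton_iff.mp he)
        have : (j : ℕ) + 1 = n₀ := by
          have := congrArg (Fin.val) he'
          simpa [Fin.val_succ, Fin.coe_castSucc] using this
        have := hmin j hq
        omega
    have hinj : Set.InjOn f Q := by
      intro a ha b hb hab
      rcases hmem a with haH | haC <;> rcases hmem b with hbH | hbC
      · rwa [hfH a (Set.disjoint_left.mp hdisj haH),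
          hfH b (Set.disjoint_left.mp hdisj hbH)] at hab
      · obtain ⟨j, rfl⟩ := hcC ▸ hbC
        rw [hfH a (Set.disjoint_left.mp hdisj haH), hfC j] at hab
        exact absurd (hab ▸ ha) (hsuccQ j hb)
      · obtain ⟨j, rfl⟩ := hcC ▸ haC
        rw [hfH b (Set.disjoint_left.mp hdisj hbH), hfC j] at hab
        exact absurd (hab ▸ hb) (hsuccQ j ha)
      · obtain ⟨j, rfl⟩ := hcC ▸ haC
        obtain ⟨j', rfl⟩ := hcC ▸ hbC
        rw [hfC j, hfC j'] at hab
        exact congrArg c (Fin.succ_injective _ (hh hab))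
    have h1 : Q.ncard ≤ (H \ {x}).ncard :=
      Set.ncard_le_ncard_of_injOn f hmaps hinj (Set.toFinite _)
    have h2 : (H \ {x}).ncard < H.ncard :=
      Set.ncard_lt_ncard (Set.sdiff_singleton_ssubset.mpr hxH) (Set.toFinite H)
    omega
end

section
/- Let V be a finite vertex set partitioned into honest vertices H and cheaters C, with every accusation from H going into C, and let w : V → ℝ assign a nonnegative weight to each vertex; for a set Q write W_Q = Σ_{v ∈ Q} w(v). Suppose that for every nonempty subset S ⊆ C there exists U ⊆ H with U ⊣ S and W_U > W_S. Then every self-consistent set Q with Q ∩ C ≠ ∅ satisfies W_Q < W_H; in particular every maximum-weight self-consistent subset of V is contained in H. -/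
/-- Weighted outnumbering: if every nonempty `S ⊆ C` is accused by some `U ⊆ H`
with `U ⊣ S` and greater total weight, then every self-consistent set meeting `C` has weight
strictly below `H`'s, and every maximum-weight self-consistent set is contained in `H`. -/
theorem stmt_4 {V : Type*} [Fintype V] [DecidableEq V] (E A : V → V → Prop)
    (hE : Irreflexive E) (hA : Irreflexive A)
    (H C : Finset V) (hdisj : Disjoint H C) (hcover : H ∪ C = Finset.univ)
    (hAcc : ∀ u v, u ∈ H → A u v → v ∈ C)
    (w : V → ℝ) (hw : ∀ v, 0 ≤ w v)
    (hout : ∀ S ⊆ C, S.Nonempty → ∃ U ⊆ H,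
      ((∀ t ∈ U, ∃ s ∈ S, A t s) ∧ (∀ s ∈ S, ∃ t ∈ U, A t s)) ∧
      ∑ v ∈ S, w v < ∑ v ∈ U, w v) :
    (∀ Q : Finset V, (∀ u ∈ Q, ∀ v ∈ Q, ¬ A u v) → (Q ∩ C).Nonempty →
      ∑ v ∈ Q, w v < ∑ v ∈ H, w v) ∧
    (∀ Q : Finset V, (∀ u ∈ Q, ∀ v ∈ Q, ¬ A u v) →
      (∀ R : Finset V, (∀ u ∈ R, ∀ v ∈ R, ¬ A u v) → ∑ v ∈ R, w v ≤ ∑ v ∈ Q, w v) →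
      Q ⊆ H) := by
  have part1 : ∀ Q : Finset V, (∀ u ∈ Q, ∀ v ∈ Q, ¬ A u v) → (Q ∩ C).Nonempty →
      ∑ v ∈ Q, w v < ∑ v ∈ H, w v := by
    intro Q hQ hne
    set S := Q ∩ C with hS
    obtain ⟨U, hUH, ⟨hU1, _⟩, hlt⟩ := hout S (Finset.inter_subset_right) hne
    -- U disjoint from Q
    have hUQ : Disjoint U Q := by
      rw [Finset.disjoint_left]
      intro t htU htQ
      obtain ⟨s, hsS, hAs⟩ := hU1 t htU
      exact hQ t htQ s (Finset.mem_of_mem_inter_left hsS) hAs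
    -- Q = (Q ∩ H) ∪ S, disjoint union
    have hQsplit : ∑ v ∈ Q, w v = ∑ v ∈ Q ∩ H, w v + ∑ v ∈ S, w v := by
      rw [← Finset.sum_union]
      · congr 1
        rw [← Finset.inter_union_distrib_left, hcover, Finset.inter_univ]
      · exact Finset.disjoint_of_subset_left Finset.inter_subset_right
          (Finset.disjoint_of_subset_right Finset.inter_subset_right hdisj)
    have hdisjUQH : Disjoint (Q ∩ H) U := by
      exact Finset.disjoint_of_subset_left Finset.inter_subset_left hUQ.symm
    have hsub : (Q ∩ H) ∪ U ⊆ H :=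
      Finset.union_subset Finset.inter_subset_right hUH
    have hHle : ∑ v ∈ Q ∩ H, w v + ∑ v ∈ U, w v ≤ ∑ v ∈ H, w v := by
      rw [← Finset.sum_union hdisjUQH]
      exact Finset.sum_le_sum_of_subset_of_nonneg hsub (fun i _ _ => hw i)
    calc ∑ v ∈ Q, w v = ∑ v ∈ Q ∩ H, w v + ∑ v ∈ S, w v := hQsplit
      _ < ∑ v ∈ Q ∩ H, w v + ∑ v ∈ U, w v := by linarith
      _ ≤ ∑ v ∈ H, w v := hHle
  refine ⟨part1, ?_⟩
  intro Q hQ hmax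
  by_contra hnot
  rw [Finset.not_subset] at hnot
  obtain ⟨x, hxQ, hxH⟩ := hnot
  have hxC : x ∈ C := by
    have : x ∈ H ∪ C := hcover ▸ Finset.mem_univ x
    rcases Finset.mem_union.mp this with h | h
    · exact absurd h hxH
    · exact h
  have hQC : (Q ∩ C).Nonempty := ⟨x, Finset.mem_inter.mpr ⟨hxQ, hxC⟩⟩
  have hHsc : ∀ u ∈ H, ∀ v ∈ H, ¬ A u v := by
    intro u hu v hv hAuv
    exact Finset.disjoint_left.mp hdisj hv (hAcc u v hu hAuv)
  have h1 := part1 Q hQ hQC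
  have h2 := hmax H hHsc
  linarith
end

section
/- Let V be a finite vertex set partitioned into honest vertices H and cheaters C, with every endorsement from H going into H and every accusation from H going into C. Suppose that for every nonempty set S ⊆ C there exists a set K ⊆ V such that: (1) S ⊆ ρ(K); (2) S ∩ ρ(k) ≠ ∅ for every k ∈ K; and (3) there exists U ⊆ H with U ⊣ K and |ρ_H(U)| > |ρ(K)|. Then every self-consistent insular set Q with Q ∩ C ≠ ∅ satisfies |Q| < |H|; hence H is the unique maximum-cardinality self-consistent insular subset of V. -/
/-- `ρ(U)`: vertices with an endorsement path into `U`. -/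
def rhoSet {V : Type*} (E : V → V → Prop) (U : Set V) : Set V :=
  {v | ∃ u ∈ U, Relation.ReflTransGen E v u}

/-- `ρ_H(U)`: vertices with an endorsement path into `U` staying inside `H`. -/
def rhoSetIn {V : Type*} (E : V → V → Prop) (H : Set V) (U : Set V) : Set V :=
  {v | ∃ u ∈ U, Relation.ReflTransGen (fun a b => E a b ∧ a ∈ H ∧ b ∈ H) v u}

/-!
If a self-consistent insular set `Q` meets `C`, apply the hypothesis to `S = Q ∩ C`. Insularity
pulls the witness set `K` into `Q`, so self-consistency keeps its accusers `U` out of `Q`, and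
insularity again keeps out everything that reaches `U`; hence `ρ_H(U) ⊆ H \ Q`. Therefore
`|Q ∩ C| ≤ |ρ(K)| < |ρ_H(U)| ≤ |H \ Q|`, i.e. `|Q| < |H|`. A set `Q ≠ H` missing `C` is a
proper subset of `H`.
-/

namespace SignedDigraph

variable {V : Type*} {E A : V → V → Prop} {H Q K U : Set V}

def IsSelfConsistent (A : V → V → Prop) (Q : Set V) : Prop :=
  ∀ u ∈ Q, ∀ v ∈ Q, ¬ A u v

def IsInsular (E : V → V → Prop) (Q : Set V) : Prop :=
  ∀ u ∈ Q, ∀ v, E u v → v ∈ Q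

theorem rhoSetIn_subset_rhoSet : rhoSetIn E H U ⊆ rhoSet E U := by
  rintro v ⟨u, hu, hvu⟩
  exact ⟨u, hu, Relation.ReflTransGen.mono (fun _ _ h => h.1) _ _ hvu⟩

theorem rhoSetIn_subset (hUH : U ⊆ H) : rhoSetIn E H U ⊆ H := by
  rintro v ⟨u, hu, hvu⟩
  rcases hvu.cases_head with rfl | ⟨_, hstep, _⟩
  · exact hUH hu
  · exact hstep.2.1

namespace IsInsular

theorem mem_of_reflTransGen (hQ : IsInsular E Q) {u v : V} (hu : u ∈ Q)
    (huv : Relation.ReflTransGen E u v) : v ∈ Q := by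
  induction huv with
  | refl => exact hu
  | tail _ hstep ih => exact hQ _ ih _ hstep

theorem subset_of_forall_inter_rhoSet_nonempty (hQ : IsInsular E Q)
    (hK : ∀ k ∈ K, (Q ∩ rhoSet E {k}).Nonempty) : K ⊆ Q := by
  intro k hk
  obtain ⟨s, hsQ, _, rfl, hsk⟩ := hK k hk
  exact hQ.mem_of_reflTransGen hsQ hsk

theorem disjoint_rhoSet (hQ : IsInsular E Q) (hUQ : Disjoint U Q) :
    Disjoint (rhoSet E U) Q := by
  rw [Set.disjoint_left]
  rintro v ⟨u, hu, hvu⟩ hvQ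
  exact Set.disjoint_left.mp hUQ hu (hQ.mem_of_reflTransGen hvQ hvu)

end IsInsular

theorem IsSelfConsistent.disjoint_of_forall_accuses (hQ : IsSelfConsistent A Q) (hKQ : K ⊆ Q)
    (hUK : ∀ t ∈ U, ∃ s ∈ K, A t s) : Disjoint U Q := by
  rw [Set.disjoint_left]
  intro t ht htQ
  obtain ⟨s, hsK, hts⟩ := hUK t ht
  exact hQ t htQ s (hKQ hsK) hts

theorem ncard_lt_of_accused_witness [Finite V] (hSC : IsSelfConsistent A Q)
    (hIns : IsInsular E Q) (hKQ : K ⊆ Q) (hQK : Q \ H ⊆ rhoSet E K) (hUH : U ⊆ H)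
    (hUK : ∀ t ∈ U, ∃ s ∈ K, A t s) (hcard : (rhoSet E K).ncard < (rhoSetIn E H U).ncard) :
    Q.ncard < H.ncard := by
  have hUQ : Disjoint (rhoSetIn E H U) Q :=
    (hIns.disjoint_rhoSet (hSC.disjoint_of_forall_accuses hKQ hUK)).mono_left
      rhoSetIn_subset_rhoSet
  have hρH : rhoSetIn E H U ⊆ H \ Q := fun v hv =>
    ⟨rhoSetIn_subset hUH hv, Set.disjoint_left.mp hUQ hv⟩
  calc Q.ncard = (H ∩ Q).ncard + (Q \ H).ncard := by
        rw [Set.inter_comm, Set.ncard_inter_add_ncard_sdiff_eq_ncard]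
    _ ≤ (H ∩ Q).ncard + (rhoSet E K).ncard := Nat.add_le_add_left (Set.ncard_le_ncard hQK) _
    _ < (H ∩ Q).ncard + (H \ Q).ncard :=
        Nat.add_lt_add_left (hcard.trans_le (Set.ncard_le_ncard hρH)) _
    _ = H.ncard := Set.ncard_inter_add_ncard_sdiff_eq_ncard _ _

end SignedDigraph

open SignedDigraph in
theorem stmt_5_general {V : Type*} [Fintype V] (E A : V → V → Prop)
    (H C : Set V) (hdisj : Disjoint H C) (hcover : H ∪ C = Set.univ)
    (hyp : ∀ S ⊆ C, S.Nonempty → ∃ K : Set V,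
      S ⊆ rhoSet E K ∧
      (∀ k ∈ K, (S ∩ rhoSet E {k}).Nonempty) ∧
      ∃ U ⊆ H, ((∀ t ∈ U, ∃ s ∈ K, A t s) ∧ (∀ s ∈ K, ∃ t ∈ U, A t s)) ∧
        (rhoSet E K).ncard < (rhoSetIn E H U).ncard) :
    (∀ Q : Set V, (∀ u ∈ Q, ∀ v ∈ Q, ¬ A u v) → (∀ u ∈ Q, ∀ v, E u v → v ∈ Q) →
      (Q ∩ C).Nonempty → Q.ncard < H.ncard) ∧
    (∀ Q : Set V, (∀ u ∈ Q, ∀ v ∈ Q, ¬ A u v) → (∀ u ∈ Q, ∀ v, E u v → v ∈ Q) →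
      Q ≠ H → Q.ncard < H.ncard) := by
  obtain rfl : C = Hᶜ := IsCompl.eq_compl (IsCompl.symm ⟨hdisj, codisjoint_iff.mpr hcover⟩)
  have meets_cheaters : ∀ Q, IsSelfConsistent A Q → IsInsular E Q → (Q \ H).Nonempty →
      Q.ncard < H.ncard := by
    intro Q hSC hIns hQC
    obtain ⟨K, hQK, hKS, U, hUH, ⟨hUK, -⟩, hcard⟩ :=
      hyp (Q \ H) (Set.sdiff_subset_compl _ _) hQC
    have hKQ : K ⊆ Q := hIns.subset_of_forall_inter_rhoSet_nonempty fun k hk =>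
      (hKS k hk).mono (Set.inter_subset_inter_left _ Set.sdiff_subset)
    exact ncard_lt_of_accused_witness hSC hIns hKQ hQK hUH hUK hcard
  refine ⟨meets_cheaters, fun Q hSC hIns hne => ?_⟩
  rcases (Q \ H).eq_empty_or_nonempty with hQH | hQC
  · exact Set.ncard_lt_ncard ((Set.sdiff_eq_empty.mp hQH).ssubset_of_ne hne)
  · exact meets_cheaters Q hSC hIns hQC

/-- Under the tree condition, every self-consistent insular set meeting `C` is
strictly smaller than `H`; hence `H` is the unique maximum self-consistent insular set. -/
theorem stmt_5 {V : Type*} [Fintype V] (E A : V → V → Prop)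
    (hE : Irreflexive E) (hA : Irreflexive A)
    (H C : Set V) (hdisj : Disjoint H C) (hcover : H ∪ C = Set.univ)
    (hEnd : ∀ u v, u ∈ H → E u v → v ∈ H)
    (hAcc : ∀ u v, u ∈ H → A u v → v ∈ C)
    (hyp : ∀ S ⊆ C, S.Nonempty → ∃ K : Set V,
      S ⊆ rhoSet E K ∧
      (∀ k ∈ K, (S ∩ rhoSet E {k}).Nonempty) ∧
      ∃ U ⊆ H, ((∀ t ∈ U, ∃ s ∈ K, A t s) ∧ (∀ s ∈ K, ∃ t ∈ U, A t s)) ∧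
        (rhoSet E K).ncard < (rhoSetIn E H U).ncard) :
    (∀ Q : Set V, (∀ u ∈ Q, ∀ v ∈ Q, ¬ A u v) → (∀ u ∈ Q, ∀ v, E u v → v ∈ Q) →
      (Q ∩ C).Nonempty → Q.ncard < H.ncard) ∧
    (∀ Q : Set V, (∀ u ∈ Q, ∀ v ∈ Q, ¬ A u v) → (∀ u ∈ Q, ∀ v, E u v → v ∈ Q) →
      Q ≠ H → Q.ncard < H.ncard) :=
  stmt_5_general E A H C hdisj hcover hyp
end

section
/- A complete signed directed graph on a finite vertex set V contains no inconsistent edge motif and no inconsistent triangle motif if and only if V can be partitioned into finitely many pairwise disjoint sets, each of which is self-consistent and insular (equivalently: endorsements hold exactly between distinct vertices in the same block and accusations hold exactly between vertices in different blocks). -/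
/-- No inconsistent edge motif and no inconsistent triangle motif. -/
def noInconsistentMotifs {V : Type*} (E A : V → V → Prop) : Prop :=
  (∀ u v : V, ¬ (E u v ∧ A v u)) ∧
  (∀ u v w : V, u ≠ v → v ≠ w → u ≠ w →
    ¬ (E u v ∧ E v w ∧ A u w) ∧ ¬ (E u v ∧ E u w ∧ A v w) ∧ ¬ (E u v ∧ E v w ∧ A w u))

/-- A complete signed directed graph has no inconsistent motifs iff its vertex
set can be partitioned into pairwise disjoint self-consistent insular blocks. -/
theorem stmt_6 {V : Type*} [Fintype V] (E A : V → V → Prop)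
    (hE : Irreflexive E) (hA : Irreflexive A)
    (hcomplete : ∀ u v : V, u ≠ v → (E u v ∨ A u v) ∧ ¬ (E u v ∧ A u v)) :
    noInconsistentMotifs E A ↔
      ∃ P : Set (Set V), ⋃₀ P = Set.univ ∧ P.PairwiseDisjoint id ∧
        ∀ B ∈ P, (∀ u ∈ B, ∀ v ∈ B, ¬ A u v) ∧ (∀ u ∈ B, ∀ v, E u v → v ∈ B) := by
  constructor
  · rintro ⟨h1, h2⟩
    set r : V → V → Prop := fun u v => u = v ∨ E u v with hr
    have hrefl : ∀ u, r u u := fun u => Or.inl rfl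
    have hEne : ∀ {u v}, E u v → u ≠ v := by
      rintro u v he rfl; exact hE u he
    have hsymm : ∀ {u v}, r u v → r v u := by
      rintro u v (rfl | he)
      · exact Or.inl rfl
      · have hne := hEne he
        have hna : ¬ A v u := fun ha => h1 u v ⟨he, ha⟩
        rcases (hcomplete v u hne.symm).1 with h | h
        · exact Or.inr h
        · exact absurd h hna
    have htrans : ∀ {u v w}, r u v → r v w → r u w := by
      rintro u v w (rfl | he1) h2'
      · exact h2'
      rcases h2' with rfl | he2
      · exact Or.inr he1
      by_cases huw : u = w
      · exact Or.inl huw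
      have hna : ¬ A u w := fun ha =>
        ((h2 u v w (hEne he1) (hEne he2) huw).1) ⟨he1, he2, ha⟩
      rcases (hcomplete u w huw).1 with h | h
      · exact Or.inr h
      · exact absurd h hna
    have hclass : ∀ {u v x}, r u x → r v x → {w | r u w} = {w | r v w} := by
      intro u v x hu hv
      ext w
      constructor
      · intro hw; exact htrans (htrans hv (hsymm hu)) hw
      · intro hw; exact htrans (htrans hu (hsymm hv)) hw
    refine ⟨Set.range (fun u => {w | r u w}), ?_, ?_, ?_⟩
    · ext x
      simp only [Set.mem_sUnion, Set.mem_range, Set.mem_univ, iff_true]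
      exact ⟨{w | r x w}, ⟨x, rfl⟩, hrefl x⟩
    · rintro B ⟨u, rfl⟩ C ⟨v, rfl⟩ hne
      refine Set.disjoint_left.mpr fun x hx hx' => hne ?_
      exact hclass hx hx'
    · rintro B ⟨u, rfl⟩
      constructor
      · intro x hx y hy ha
        have hxy : r x y := htrans (hsymm hx) hy
        rcases hxy with rfl | he
        · exact hA x ha
        · exact (hcomplete x y (hEne he)).2 ⟨he, ha⟩
      · intro x hx y he
        exact htrans hx (Or.inr he)
  · rintro ⟨P, hcover, hdisj, hblocks⟩
    have hmem : ∀ x : V, ∃ B ∈ P, x ∈ B := by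
      intro x
      have : x ∈ ⋃₀ P := hcover ▸ Set.mem_univ x
      simpa using this
    -- key: E u v → u and v lie in a common block, and then no accusation either way
    have key : ∀ u v : V, E u v → ∃ B ∈ P, u ∈ B ∧ v ∈ B := by
      intro u v he
      obtain ⟨B, hB, hu⟩ := hmem u
      exact ⟨B, hB, hu, (hblocks B hB).2 u hu v he⟩
    constructor
    · intro u v ⟨he, ha⟩
      obtain ⟨B, hB, hu, hv⟩ := key u v he
      exact (hblocks B hB).1 v hv u hu ha
    · intro u v w _ _ _
      refine ⟨?_, ?_, ?_⟩
      · rintro ⟨he1, he2, ha⟩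
        obtain ⟨B, hB, hu, hv⟩ := key u v he1
        have hw : w ∈ B := (hblocks B hB).2 v hv w he2
        exact (hblocks B hB).1 u hu w hw ha
      · rintro ⟨he1, he2, ha⟩
        obtain ⟨B, hB, hu, hv⟩ := key u v he1
        have hw : w ∈ B := (hblocks B hB).2 u hu w he2
        exact (hblocks B hB).1 v hv w hw ha
      · rintro ⟨he1, he2, ha⟩
        obtain ⟨B, hB, hu, hv⟩ := key u v he1
        have hw : w ∈ B := (hblocks B hB).2 v hv w he2
        exact (hblocks B hB).1 w hw u hu ha
end

section
/- If the vertex set V of a signed directed graph can be partitioned into pairwise disjoint sets each of which is self-consistent and insular, then the graph contains no inconsistent edge motif and no inconsistent triangle motif. -/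
/-- If the vertex set is partitioned into pairwise disjoint self-consistent
insular blocks, then the graph contains no inconsistent edge or triangle motif. -/
theorem stmt_7 {V : Type*} [Fintype V] (E A : V → V → Prop)
    (hE : Irreflexive E) (hA : Irreflexive A)
    (P : Set (Set V)) (hcover : ⋃₀ P = Set.univ) (hPdisj : P.PairwiseDisjoint id)
    (hblocks : ∀ B ∈ P, (∀ u ∈ B, ∀ v ∈ B, ¬ A u v) ∧ (∀ u ∈ B, ∀ v, E u v → v ∈ B)) :
    (∀ u v : V, ¬ (E u v ∧ A v u)) ∧
    (∀ u v w : V, u ≠ v → v ≠ w → u ≠ w →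
      ¬ (E u v ∧ E v w ∧ A u w) ∧ ¬ (E u v ∧ E u w ∧ A v w) ∧ ¬ (E u v ∧ E v w ∧ A w u)) := by
  have hmem : ∀ u : V, ∃ B ∈ P, u ∈ B := by
    intro u
    have : u ∈ ⋃₀ P := by rw [hcover]; trivial
    simpa using this
  have key : ∀ u v : V, E u v → ∀ B ∈ P, u ∈ B → v ∈ B := by
    intro u v huv B hB hu
    exact (hblocks B hB).2 u hu v huv
  constructor
  · rintro u v ⟨he, ha⟩
    obtain ⟨B, hB, hu⟩ := hmem u
    exact (hblocks B hB).1 v (key u v he B hB hu) u hu ha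
  · intro u v w _ _ _
    obtain ⟨B, hB, hu⟩ := hmem u
    refine ⟨?_, ?_, ?_⟩
    · rintro ⟨h1, h2, h3⟩
      exact (hblocks B hB).1 u hu w (key v w h2 B hB (key u v h1 B hB hu)) h3
    · rintro ⟨h1, h2, h3⟩
      exact (hblocks B hB).1 v (key u v h1 B hB hu) w (key u w h2 B hB hu) h3
    · rintro ⟨h1, h2, h3⟩
      exact (hblocks B hB).1 w (key v w h2 B hB (key u v h1 B hB hu)) u hu h3
end

section
/- In a complete signed directed graph with no inconsistent edge motif and no inconsistent triangle motif, there are no inconsistencies at any depth: for every vertex u and all vertices v, w ∈ σ(u), neither v⊣w nor w⊣v holds (in particular, no vertex of σ(u) accuses u or is accused by u). Hence on complete graphs, equilibrium under local implication avoiding dynamics implies equilibrium under strong implication avoiding dynamics. -/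
/-- In a complete signed directed graph with no inconsistent edge or triangle
motif, for every vertex `u` and all `v, w ∈ σ(u)`, neither `v ⊣ w` nor `w ⊣ v`. -/
theorem stmt_14 {V : Type*} [Fintype V] (E A : V → V → Prop)
    (hE : Irreflexive E) (hA : Irreflexive A)
    (hcomplete : ∀ u v : V, u ≠ v → (E u v ∨ A u v) ∧ ¬ (E u v ∧ A u v))
    (hedge : ∀ u v : V, ¬ (E u v ∧ A v u))
    (htri : ∀ u v w : V, u ≠ v → v ≠ w → u ≠ w →
      ¬ (E u v ∧ E v w ∧ A u w) ∧ ¬ (E u v ∧ E u w ∧ A v w) ∧ ¬ (E u v ∧ E v w ∧ A w u)) :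
    ∀ u v w : V, Relation.ReflTransGen E u v → Relation.ReflTransGen E u w →
      ¬ A v w ∧ ¬ A w v := by
  have key : ∀ u v : V, Relation.ReflTransGen E u v → u = v ∨ E u v := by
    intro u v h
    induction h with
    | refl => exact Or.inl rfl
    | @tail b c _ hbc ih =>
      rcases ih with rfl | hub
      · exact Or.inr hbc
      · by_cases huc : u = c
        · exact Or.inl huc
        · right
          rcases (hcomplete u c huc).1 with h | h
          · exact h
          · exact absurd ⟨hub, hbc, h⟩ ((htri u b c (fun e => hE u (e ▸ hub))
              (fun e => hE b (e ▸ hbc)) huc).1)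
  have main : ∀ u v w : V, Relation.ReflTransGen E u v → Relation.ReflTransGen E u w →
      ¬ A v w := by
    intro u v w hv hw
    by_cases hvw : v = w
    · subst hvw; exact hA v
    rcases key u v hv with rfl | huv
    · rcases key u w hw with rfl | huw
      · exact hA u
      · exact fun a => (hcomplete u w hvw).2 ⟨huw, a⟩
    · rcases key u w hw with rfl | huw
      · exact fun a => hedge u v ⟨huv, a⟩
      · exact fun a => ((htri u v w (fun e => hE u (e ▸ huv)) hvw
          (fun e => hE u (e ▸ huw))).2.1) ⟨huv, huw, a⟩
  intro u v w hv hw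
  exact ⟨main u v w hv hw, main u w v hw hv⟩
end

section
/- Let C = {c_1, …, c_k} be distinct vertices and h_1, …, h_{k+1} distinct vertices disjoint from C, such that h_i ⊣ c_i for each 1 ≤ i ≤ k and h_{i+1} ⊣ c_i for each 1 ≤ i ≤ k. Then for every nonempty subset S ⊆ C there exists a set U ⊆ {h_1, …, h_{k+1}} with U ⊣ S and |U| > |S|. -/
/-- Given the accusation path `h₁ ⊣ c₁ ⊢ h₂ ⊣ c₂ ⋯ ⊢ h_{k+1}`, every nonempty
`S ⊆ {c₁, …, c_k}` admits `U ⊆ {h₁, …, h_{k+1}}` with `U ⊣ S` and `|U| > |S|`. -/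
theorem stmt_16 {V : Type*} [Fintype V] (E A : V → V → Prop)
    (hE : Irreflexive E) (hA : Irreflexive A)
    (k : ℕ) (c : Fin k → V) (hc : Function.Injective c)
    (h : Fin (k + 1) → V) (hh : Function.Injective h)
    (hdisj : ∀ i j, h i ≠ c j)
    (hacc1 : ∀ i : Fin k, A (h i.castSucc) (c i))
    (hacc2 : ∀ i : Fin k, A (h i.succ) (c i)) :
    ∀ S ⊆ Set.range c, S.Nonempty → ∃ U ⊆ Set.range h,
      ((∀ t ∈ U, ∃ s ∈ S, A t s) ∧ (∀ s ∈ S, ∃ t ∈ U, A t s)) ∧ S.ncard < U.ncard := by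
  classical
  intro S hS hSne
  set I : Finset (Fin k) := Finset.univ.filter (fun i => c i ∈ S) with hI
  have hmemI : ∀ i, i ∈ I ↔ c i ∈ S := by
    intro i; simp [hI]
  have hSeq : S = c '' (I : Set (Fin k)) := by
    ext s
    constructor
    · intro hs
      obtain ⟨i, hi⟩ := hS hs
      exact ⟨i, by simpa [hmemI, hi] using hs, hi⟩
    · rintro ⟨i, hi, rfl⟩
      exact (hmemI i).1 hi
  have hIne : I.Nonempty := by
    obtain ⟨s, hs⟩ := hSne
    obtain ⟨i, hi⟩ := hS hs
    exact ⟨i, (hmemI i).2 (hi ▸ hs)⟩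
  set J : Finset (Fin (k + 1)) := I.image Fin.castSucc ∪ I.image Fin.succ with hJ
  refine ⟨h '' (J : Set (Fin (k + 1))), ?_, ⟨?_, ?_⟩, ?_⟩
  · rintro t ⟨j, _, rfl⟩; exact ⟨j, rfl⟩
  · rintro t ⟨j, hj, rfl⟩
    simp only [hJ, Finset.coe_union, Finset.coe_image, Set.mem_union, Set.mem_image,
      Finset.mem_coe] at hj
    rcases hj with ⟨i, hi, rfl⟩ | ⟨i, hi, rfl⟩
    · exact ⟨c i, (hmemI i).1 hi, hacc1 i⟩
    · exact ⟨c i, (hmemI i).1 hi, hacc2 i⟩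
  · intro s hs
    obtain ⟨i, hi⟩ := hS hs
    have hiI : i ∈ I := (hmemI i).2 (hi ▸ hs)
    refine ⟨h i.castSucc, ⟨i.castSucc, ?_, rfl⟩, hi ▸ hacc1 i⟩
    simp only [hJ, Finset.coe_union, Finset.coe_image, Set.mem_union, Set.mem_image,
      Finset.mem_coe]
    exact Or.inl ⟨i, hiI, rfl⟩
  · -- cardinality
    have hScard : S.ncard = I.card := by
      rw [hSeq, Set.ncard_image_of_injective _ hc, Set.ncard_coe_finset]
    have hUcard : (h '' (J : Set (Fin (k + 1)))).ncard = J.card := by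
      rw [Set.ncard_image_of_injective _ hh, Set.ncard_coe_finset]
    rw [hScard, hUcard]
    -- show I.card < J.card via images in ℕ
    set N : Finset ℕ := I.image Fin.val with hN
    have hNcard : N.card = I.card := Finset.card_image_of_injective _ Fin.val_injective
    have hJval : J.image Fin.val = N ∪ N.image (· + 1) := by
      simp only [hJ, hN, Finset.image_union, Finset.image_image]
      congr 1
    have hJcard : J.card = (N ∪ N.image (· + 1)).card := by
      rw [← hJval, Finset.card_image_of_injective _ Fin.val_injective]
    rw [hJcard, ← hNcard]
    have hNne : N.Nonempty := hIne.image _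
    have hmax : N.max' hNne + 1 ∈ N ∪ N.image (· + 1) := by
      exact Finset.mem_union_right _ (Finset.mem_image_of_mem _ (N.max'_mem hNne))
    have hmaxnot : N.max' hNne + 1 ∉ N := by
      intro hmem
      have := N.le_max' _ hmem
      omega
    have hsub : insert (N.max' hNne + 1) N ⊆ N ∪ N.image (· + 1) := by
      intro x hx
      rcases Finset.mem_insert.1 hx with rfl | hx
      · exact hmax
      · exact Finset.mem_union_left _ hx
    calc N.card < (insert (N.max' hNne + 1) N).card := by
          rw [Finset.card_insert_of_notMem hmaxnot]; omega
      _ ≤ _ := Finset.card_le_card hsub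
end
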